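/- Let S⁻, S⁺ : Matrix 𝒮 ℛ ℝ have nonnegative entries and set 𝕊 = S⁺ − S⁻. Assume: (a) for every r ∈ ℛ, the supports of the r-th columns of S⁻ and S⁺ are disjoint (there is no i with S⁻ i r > 0 and S⁺ i r > 0); (b) every column of S⁻ is semi-positive; (c) every column of S⁺ is semi-positive; (d) every row of S⁻ is semi-positive; (e) there exists a positive v : ℛ → ℝ with 𝕊.mulVec v positive. Then every column of 𝕊 has at least one strictly positive entry and at least one strictly negative entry, and every row of 𝕊 has at least one strictly positive entry and at least one strictly negative entry. -/

import Mathlib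

open Matrix

/-- A real vector is positive if all of its entries are strictly positive. -/
def Positive {ι : Type*} (v : ι → ℝ) : Prop := ∀ i, 0 < v i

/-- A real vector is semi-positive if all of its entries are nonnegative
and the vector is nonzero. -/
def SemiPositive {ι : Type*} (v : ι → ℝ) : Prop := (∀ i, 0 ≤ v i) ∧ v ≠ 0

lemma SemiPositive.exists_pos {ι : Type*} {v : ι → ℝ} (h : SemiPositive v) :
    ∃ i, 0 < v i := by
  obtain ⟨hn, hne⟩ := h
  by_contra hc
  push_neg at hc
  exact hne (funext fun i => le_antisymm (hc i) (hn i))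

/-- Theorem: for a stoichiometrically autocatalytic network (disjoint input
and output supports, every reaction consumes and produces some species,
every species is consumed, and the network is productive), every column and
every row of the stoichiometric matrix `𝕊 = Sp - Sm` has both a strictly
positive and a strictly negative entry. -/
theorem stoichiometricallyAutocatalytic_rows_cols {𝒮 ℛ : Type*}
    [Fintype 𝒮] [Fintype ℛ] [Nonempty 𝒮] [Nonempty ℛ]
    (Sm Sp : Matrix 𝒮 ℛ ℝ)
    (hSm : ∀ i r, 0 ≤ Sm i r) (hSp : ∀ i r, 0 ≤ Sp i r)
    (hdisj : ∀ r : ℛ, ¬ ∃ i : 𝒮, 0 < Sm i r ∧ 0 < Sp i r)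
    (hcolSm : ∀ r : ℛ, SemiPositive (fun i => Sm i r))
    (hcolSp : ∀ r : ℛ, SemiPositive (fun i => Sp i r))
    (hrowSm : ∀ i : 𝒮, SemiPositive (fun r => Sm i r))
    (hprod : ∃ v : ℛ → ℝ, Positive v ∧ Positive ((Sp - Sm).mulVec v)) :
    (∀ r : ℛ, (∃ i : 𝒮, 0 < (Sp - Sm) i r) ∧ (∃ i : 𝒮, (Sp - Sm) i r < 0)) ∧
    (∀ i : 𝒮, (∃ r : ℛ, 0 < (Sp - Sm) i r) ∧ (∃ r : ℛ, (Sp - Sm) i r < 0)) := by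
  have hSmzero : ∀ i r, 0 < Sp i r → Sm i r = 0 := by
    intro i r h
    by_contra hne
    exact hdisj r ⟨i, lt_of_le_of_ne (hSm i r) (Ne.symm hne), h⟩
  have hSpzero : ∀ i r, 0 < Sm i r → Sp i r = 0 := by
    intro i r h
    by_contra hne
    exact hdisj r ⟨i, h, lt_of_le_of_ne (hSp i r) (Ne.symm hne)⟩
  constructor
  · intro r
    constructor
    · obtain ⟨i, hi⟩ := (hcolSp r).exists_pos
      exact ⟨i, by simp only [Matrix.sub_apply]; rw [hSmzero i r hi]; simpa using hi⟩
    · obtain ⟨i, hi⟩ := (hcolSm r).exists_pos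
      exact ⟨i, by simp only [Matrix.sub_apply]; rw [hSpzero i r hi]; simpa using hi⟩
  · intro i
    constructor
    · obtain ⟨v, hv, hSv⟩ := hprod
      have h := hSv i
      rw [mulVec, dotProduct] at h
      by_contra hc
      push_neg at hc
      have : ∑ r, (Sp - Sm) i r * v r ≤ 0 :=
        Finset.sum_nonpos fun r _ => mul_nonpos_of_nonpos_of_nonneg (hc r) (hv r).le
      linarith
    · obtain ⟨r, hr⟩ := (hrowSm i).exists_pos
      exact ⟨r, by simp only [Matrix.sub_apply]; rw [hSpzero i r hr]; simpa using hr⟩
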